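/- For every j ∈ [k]: (i) for each r ∈ [N] the path Canonical_edge(r; c_j⇝d_j) is a shortest c_j⇝d_j path in D_edge, with exactly 3kN + 2 vertices; and (ii) every shortest directed path from c_j to d_j in D_edge is an image in D_edge of the horizontal canonical path Canonical(ℓ; c_j⇝d_j) of D_int for some ℓ ∈ [N]. -/

import Mathlib

/-!
Give every vertex of `D_edge` a height: the three copies of the grid vertex `w_{i,j}^{q,ℓ}`
used by a horizontal canonical path sit at heights `3(iN+q)+1, +2, +3`, `c_j` at `0` and `d_j`
at `3kN+1`. No edge climbs more than one level, so a `c_j ⇝ d_j` path has at least `3kN+2`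
vertices, and the images of `Canonical(r; c_j⇝d_j)` climb exactly one level per edge. A path
attaining the bound climbs one level at every step; such steps keep `j` and `ℓ` fixed and follow
the horizontal order of the grid cells, so the path only visits vertices of a single image of
`Canonical(ℓ; c_j⇝d_j)`. Both lists being strictly increasing in height, they coincide.
-/

/-- A directed path (self-avoiding walk) from `s` to `t` in the digraph with
edge relation `E`, given as the list of its vertices in order. -/
structure IsPathList {V : Type*} (E : V → V → Prop) (s t : V) (p : List V) : Prop where
  chain : p.Chain' E
  nodup : p.Nodup
  head : p.head? = some s
  last : p.getLast? = some t

/-- A shortest directed `s⇝t` path, where the length of a path is its number of vertices. -/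
def IsShortestDirPath {V : Type*} (E : V → V → Prop) (s t : V) (p : List V) : Prop :=
  IsPathList E s t p ∧ ∀ q : List V, IsPathList E s t q → p.length ≤ q.length

/-- Symmetrization of a relation: the adjacency of the undirected graph obtained by
forgetting the orientation of the edges. -/
def UAdj {V : Type*} (E : V → V → Prop) (x y : V) : Prop := E x y ∨ E y x

/-- The cost of a path: the sum of the costs of its vertices. -/
def pathCost {V : Type*} (cost : V → ℕ) (p : List V) : ℕ := (p.map cost).sum

/-- A shortest (minimum-cost) `s`–`t` path in the undirected graph obtained from `E`. -/
def IsShortestCostPath {V : Type*} (E : V → V → Prop) (cost : V → ℕ) (s t : V)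
    (p : List V) : Prop :=
  IsPathList (UAdj E) s t p ∧
    ∀ q : List V, IsPathList (UAdj E) s t q → pathCost cost p ≤ pathCost cost q

/-- The (directed) edges traversed by a path, as ordered pairs of consecutive vertices. -/
def dirEdges {V : Type*} (p : List V) : List (V × V) := p.zip p.tail

/-- Two directed paths are edge-disjoint. -/
def EdgeDisj {V : Type*} (p q : List V) : Prop := ∀ e ∈ dirEdges p, e ∉ dirEdges q

/-- The (undirected) edges traversed by a path, as unordered pairs. -/
def uEdges {V : Type*} (p : List V) : List (Sym2 V) := (dirEdges p).map fun e => s(e.1, e.2)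

/-- Two undirected paths are edge-disjoint. -/
def UEdgeDisj {V : Type*} (p q : List V) : Prop := ∀ e ∈ uEdges p, e ∉ uEdges q

/-- Two paths are vertex-disjoint. -/
def VertDisj {V : Type*} (p q : List V) : Prop := ∀ v ∈ p, v ∉ q

/-- `(q,ℓ) ∈ S_{i,j}`: for `i = j` this means `q = ℓ` and for `i ≠ j` it means that
`v_q v_ℓ` is an edge of `G`. -/
def Split {k N : ℕ} (G : SimpleGraph (Fin N)) (i j : Fin k) (q ℓ : Fin N) : Prop :=
  (i = j ∧ q = ℓ) ∨ (i ≠ j ∧ G.Adj q ℓ)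

instance {k N : ℕ} (G : SimpleGraph (Fin N)) [DecidableRel G.Adj]
    (i j : Fin k) (q ℓ : Fin N) : Decidable (Split G i j q ℓ) := by
  unfold Split; infer_instance

/-- The tags of the copies into which a grid vertex of `D_int` is split in `D_edge`. -/
inductive ETag where
  | LB | Mid | Hor | Ver | TR
  deriving DecidableEq

/-- The vertices of the graph `D_edge` (also the vertex set of `U_edge`): each grid
vertex `w_{i,j}^{q,ℓ}` of `D_int` gives rise to copies `w_LB, w_Mid, w_Hor, w_Ver, w_TR`
(of which only `{LB, Mid, TR}`, respectively `{LB, Hor, Ver, TR}`, carry edges,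
according to whether `w` is one-split or two-split), plus the terminal vertices. -/
inductive DEdgeV (k N : ℕ) where
  | grid (i j : Fin k) (q ℓ : Fin N) (t : ETag)
  | a (i : Fin k)
  | b (i : Fin k)
  | c (j : Fin k)
  | d (j : Fin k)
  deriving DecidableEq

/-- The directed edges of `D_edge`. -/
inductive DEdgeE (k N : ℕ) (G : SimpleGraph (Fin N)) : DEdgeV k N → DEdgeV k N → Prop where
  /-- one-split: `w_LB → w_Mid` -/
  | mid1 (i j : Fin k) (q ℓ : Fin N) (h : ¬ Split G i j q ℓ) :
      DEdgeE k N G (.grid i j q ℓ .LB) (.grid i j q ℓ .Mid)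
  /-- one-split: `w_Mid → w_TR` -/
  | mid2 (i j : Fin k) (q ℓ : Fin N) (h : ¬ Split G i j q ℓ) :
      DEdgeE k N G (.grid i j q ℓ .Mid) (.grid i j q ℓ .TR)
  /-- two-split: `w_LB → w_Hor` -/
  | hor1 (i j : Fin k) (q ℓ : Fin N) (h : Split G i j q ℓ) :
      DEdgeE k N G (.grid i j q ℓ .LB) (.grid i j q ℓ .Hor)
  /-- two-split: `w_Hor → w_TR` -/
  | hor2 (i j : Fin k) (q ℓ : Fin N) (h : Split G i j q ℓ) :
      DEdgeE k N G (.grid i j q ℓ .Hor) (.grid i j q ℓ .TR)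
  /-- two-split: `w_LB → w_Ver` -/
  | ver1 (i j : Fin k) (q ℓ : Fin N) (h : Split G i j q ℓ) :
      DEdgeE k N G (.grid i j q ℓ .LB) (.grid i j q ℓ .Ver)
  /-- two-split: `w_Ver → w_TR` -/
  | ver2 (i j : Fin k) (q ℓ : Fin N) (h : Split G i j q ℓ) :
      DEdgeE k N G (.grid i j q ℓ .Ver) (.grid i j q ℓ .TR)
  /-- former edge `w_{i,j}^{q,ℓ} → w_{i,j}^{q,ℓ+1}` -/
  | up (i j : Fin k) (q ℓ ℓ' : Fin N) (h : (ℓ' : ℕ) = (ℓ : ℕ) + 1) :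
      DEdgeE k N G (.grid i j q ℓ .TR) (.grid i j q ℓ' .LB)
  /-- former edge `w_{i,j}^{q,ℓ} → w_{i,j}^{q+1,ℓ}` -/
  | right (i j : Fin k) (q q' ℓ : Fin N) (h : (q' : ℕ) = (q : ℕ) + 1) :
      DEdgeE k N G (.grid i j q ℓ .TR) (.grid i j q' ℓ .LB)
  /-- former edge `w_{i,j}^{N,ℓ} → w_{i+1,j}^{1,ℓ}` -/
  | hmatch (i i' j : Fin k) (q q' ℓ : Fin N)
      (hi : (i' : ℕ) = (i : ℕ) + 1) (hq : (q : ℕ) + 1 = N) (hq' : (q' : ℕ) = 0) :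
      DEdgeE k N G (.grid i j q ℓ .TR) (.grid i' j q' ℓ .LB)
  /-- former edge `w_{i,j}^{ℓ,N} → w_{i,j+1}^{ℓ,1}` -/
  | vmatch (i j j' : Fin k) (q ℓ ℓ' : Fin N)
      (hj : (j' : ℕ) = (j : ℕ) + 1) (hl : (ℓ : ℕ) + 1 = N) (hl' : (ℓ' : ℕ) = 0) :
      DEdgeE k N G (.grid i j q ℓ .TR) (.grid i j' q ℓ' .LB)
  /-- former edge `a_i → w_{i,1}^{q,1}` -/
  | srcA (i j : Fin k) (q ℓ : Fin N) (hj : (j : ℕ) = 0) (hl : (ℓ : ℕ) = 0) :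
      DEdgeE k N G (.a i) (.grid i j q ℓ .LB)
  /-- former edge `w_{i,k}^{q,N} → b_i` -/
  | snkB (i j : Fin k) (q ℓ : Fin N) (hj : (j : ℕ) + 1 = k) (hl : (ℓ : ℕ) + 1 = N) :
      DEdgeE k N G (.grid i j q ℓ .TR) (.b i)
  /-- former edge `c_j → w_{1,j}^{1,ℓ}` -/
  | srcC (i j : Fin k) (q ℓ : Fin N) (hi : (i : ℕ) = 0) (hq : (q : ℕ) = 0) :
      DEdgeE k N G (.c j) (.grid i j q ℓ .LB)
  /-- former edge `w_{k,j}^{N,ℓ} → d_j` -/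
  | snkD (i j : Fin k) (q ℓ : Fin N) (hi : (i : ℕ) + 1 = k) (hq : (q : ℕ) + 1 = N) :
      DEdgeE k N G (.grid i j q ℓ .TR) (.d j)

/-- The three vertices `w_LB, w_?, w_TR` replacing a grid vertex `w` on (the image of)
a canonical path: the middle vertex is `w_Mid` if `w` is one-split, and is chosen among
`w_Hor` / `w_Ver` (according to `b`) if `w` is two-split. -/
def eTriple {k N : ℕ} (G : SimpleGraph (Fin N)) [DecidableRel G.Adj]
    (i j : Fin k) (q ℓ : Fin N) (b : Bool) : List (DEdgeV k N) :=
  [DEdgeV.grid i j q ℓ ETag.LB,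
   DEdgeV.grid i j q ℓ
     (if Split G i j q ℓ then (if b then ETag.Hor else ETag.Ver) else ETag.Mid),
   DEdgeV.grid i j q ℓ ETag.TR]

/-- An image in `D_edge`/`U_edge` of the horizontal canonical path
`Canonical(r; c_j⇝d_j)` of `D_int`, determined by a choice `χ` of `Hor`/`Ver`
at each two-split vertex. -/
def imageH {k N : ℕ} (G : SimpleGraph (Fin N)) [DecidableRel G.Adj]
    (χ : Fin k → Fin N → Bool) (j : Fin k) (r : Fin N) : List (DEdgeV k N) :=
  DEdgeV.c j ::
    (((List.finRange k).flatMap fun i =>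
        (List.finRange N).flatMap fun q => eTriple G i j q r (χ i q)) ++ [DEdgeV.d j])

/-- An image in `D_edge`/`U_edge` of the vertical canonical path
`Canonical(r; a_i⇝b_i)` of `D_int`, determined by a choice `χ` of `Hor`/`Ver`
at each two-split vertex. -/
def imageV {k N : ℕ} (G : SimpleGraph (Fin N)) [DecidableRel G.Adj]
    (χ : Fin k → Fin N → Bool) (i : Fin k) (r : Fin N) : List (DEdgeV k N) :=
  DEdgeV.a i ::
    (((List.finRange k).flatMap fun j =>
        (List.finRange N).flatMap fun ℓ => eTriple G i j r ℓ (χ j ℓ)) ++ [DEdgeV.b i])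

/-- `Canonical_edge(r; c_j⇝d_j)`: the image of `Canonical(r; c_j⇝d_j)` choosing
`w_LB → w_Hor → w_TR` at every two-split vertex. -/
def canonEdgeH {k N : ℕ} (G : SimpleGraph (Fin N)) [DecidableRel G.Adj]
    (j : Fin k) (r : Fin N) : List (DEdgeV k N) :=
  imageH G (fun _ _ => true) j r

/-- `Canonical_edge(r; a_i⇝b_i)`: the image of `Canonical(r; a_i⇝b_i)` choosing
`w_LB → w_Ver → w_TR` at every two-split vertex. -/
def canonEdgeV {k N : ℕ} (G : SimpleGraph (Fin N)) [DecidableRel G.Adj]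
    (i : Fin k) (r : Fin N) : List (DEdgeV k N) :=
  imageV G (fun _ _ => false) i r

section Potential

variable {V : Type*}

def TightEdge (E : V → V → Prop) (μ : V → ℕ) (x y : V) : Prop := E x y ∧ μ y = μ x + 1

variable {E : V → V → Prop} {μ : V → ℕ}

theorem List.IsChain.potential_le (hE : ∀ x y, E x y → μ y ≤ μ x + 1) {p : List V} {x y : V}
    (hp : p.IsChain E) (hx : p.head? = some x) (hy : p.getLast? = some y) :
    μ y + 1 ≤ μ x + p.length := by
  induction p generalizing x with
  | nil => simp at hx
  | cons a t ih =>
    obtain rfl : a = x := by simpa using hx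
    rcases t with _ | ⟨b, t⟩
    · simp_all
    rw [List.isChain_cons_cons] at hp
    have := ih hp.2 rfl (by rwa [List.getLast?_cons_cons] at hy)
    have := hE _ _ hp.1
    simp only [List.length_cons] at *
    omega

theorem List.IsChain.potential_eq_of_tightEdge {p : List V} {x y : V}
    (hp : p.IsChain (TightEdge E μ)) (hx : p.head? = some x) (hy : p.getLast? = some y) :
    μ y + 1 = μ x + p.length := by
  induction p generalizing x with
  | nil => simp at hx
  | cons a t ih =>
    obtain rfl : a = x := by simpa using hx
    rcases t with _ | ⟨b, t⟩
    · simp_all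
    rw [List.isChain_cons_cons] at hp
    have := ih hp.2 rfl (by rwa [List.getLast?_cons_cons] at hy)
    have := hp.1.2
    simp only [List.length_cons] at *
    omega

theorem List.IsChain.tightEdge_of_potential_ge (hE : ∀ x y, E x y → μ y ≤ μ x + 1)
    {p : List V} {x y : V} (hp : p.IsChain E) (hx : p.head? = some x)
    (hy : p.getLast? = some y) (hlen : μ x + p.length ≤ μ y + 1) :
    p.IsChain (TightEdge E μ) := by
  induction p generalizing x with
  | nil => exact .nil
  | cons a t ih =>
    obtain rfl : a = x := by simpa using hx
    rcases t with _ | ⟨b, t⟩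
    · exact .singleton a
    rw [List.isChain_cons_cons] at hp ⊢
    rw [List.getLast?_cons_cons] at hy
    have hb := hp.2.potential_le hE rfl hy
    have hab := hE _ _ hp.1
    simp only [List.length_cons] at *
    exact ⟨⟨hp.1, by omega⟩, ih hp.2 rfl hy (by omega)⟩

theorem List.IsChain.pairwise_map_of_tightEdge {p : List V}
    (hp : p.IsChain (TightEdge E μ)) : (p.map μ).Pairwise (· < ·) :=
  ((List.isChain_map μ).2 (hp.imp fun _ _ h => by rw [h.2]; exact Nat.lt_succ_self _)).pairwise

theorem List.eq_of_subset_of_pairwise_map_lt {p L : List V} (hp : (p.map μ).Pairwise (· < ·))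
    (hL : (L.map μ).Pairwise (· < ·)) (hsub : p ⊆ L) (hlen : L.length ≤ p.length) :
    p = L :=
  List.Perm.eq_of_pairwise (fun _ _ _ _ h h' => absurd (h.trans h') (lt_irrefl _))
    (List.pairwise_map.1 hp) (List.pairwise_map.1 hL)
    ((hp.nodup.of_map μ).subperm hsub |>.perm_of_length_le hlen)

end Potential

theorem List.IsChain.flatMap {α β : Type*} {R : β → β → Prop} {l : List α}
    {f : α → List β}
    (hl : l.IsChain fun a b => ∀ x ∈ (f a).getLast?, ∀ y ∈ (f b).head?, R x y)
    (hne : ∀ a, f a ≠ []) (hf : ∀ a ∈ l, (f a).IsChain R) :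
    (l.flatMap f).IsChain R := by
  rw [List.flatMap_def]
  exact (List.isChain_flatten (by simpa using fun a _ => (hne a).symm)).2
    ⟨by simpa using hf, (List.isChain_map f).2 hl⟩

theorem List.isChain_finRange (n : ℕ) :
    (List.finRange n).IsChain fun a b : Fin n => (b : ℕ) = a + 1 := by
  rw [← List.ofFn_id]
  exact List.isChain_ofFn.2 fun _ _ => by simp

theorem List.head?_flatMap_finRange {α : Type*} {n : ℕ} (f : Fin (n + 1) → List α)
    (h : f 0 ≠ []) : ((List.finRange (n + 1)).flatMap f).head? = (f 0).head? := by
  rw [List.finRange_succ, List.flatMap_cons, List.head?_append_of_ne_nil _ h]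

theorem List.getLast?_flatMap_finRange {α : Type*} {n : ℕ} (f : Fin (n + 1) → List α)
    (h : f (Fin.last n) ≠ []) :
    ((List.finRange (n + 1)).flatMap f).getLast? = (f (Fin.last n)).getLast? := by
  rw [List.finRange_succ_last, List.flatMap_append, List.flatMap_singleton,
    List.getLast?_append_of_ne_nil _ h]

def ETag.height : ETag → ℕ
  | .LB => 0
  | .TR => 2
  | _ => 1

-- `a_i` and `b_i` lie on no `c_j ⇝ d_j` path: their heights only keep every edge climbing at
-- most one level.
def DEdgeV.height {k N : ℕ} : DEdgeV k N → ℕ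
  | .grid i _ q _ t => 3 * ((i : ℕ) * N + q) + t.height + 1
  | .c _ => 0
  | .d _ => 3 * (k * N) + 1
  | .a _ => 3 * (k * N)
  | .b _ => 0

section DEdge

variable {k N : ℕ} {G : SimpleGraph (Fin N)} {j : Fin k}

theorem DEdgeE.height_le {x y : DEdgeV k N} (h : DEdgeE k N G x y) :
    y.height ≤ x.height + 1 := by
  cases h with
  | hmatch i i' _ q _ _ hi hq =>
    simp only [DEdgeV.height, ETag.height, hi, Nat.succ_mul]
    omega
  | srcA i _ q =>
    have : (i : ℕ) * N + q < k * N := by nlinarith [i.2, q.2]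
    simp only [DEdgeV.height, ETag.height]
    omega
  | snkD i _ q _ hi hq =>
    simp only [DEdgeV.height, ETag.height, ← hi, Nat.succ_mul]
    omega
  | srcC i _ q _ hi => simp only [DEdgeV.height, ETag.height, hi, Nat.zero_mul]; omega
  | _ => simp only [DEdgeV.height, ETag.height]; omega

theorem IsPathList.length_ge {p : List (DEdgeV k N)}
    (hp : IsPathList (DEdgeE k N G) (.c j) (.d j) p) : 3 * k * N + 2 ≤ p.length := by
  have := List.IsChain.potential_le (E := DEdgeE k N G) (fun _ _ => DEdgeE.height_le) hp.chain
    hp.head hp.last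
  simp only [DEdgeV.height] at this
  rw [Nat.mul_assoc]
  omega

theorem IsPathList.isChain_tightEdge {p : List (DEdgeV k N)}
    (hp : IsPathList (DEdgeE k N G) (.c j) (.d j) p) (hlen : p.length ≤ 3 * k * N + 2) :
    p.IsChain (TightEdge (DEdgeE k N G) DEdgeV.height) :=
  List.IsChain.tightEdge_of_potential_ge (E := DEdgeE k N G) (fun _ _ => DEdgeE.height_le)
    hp.chain hp.head hp.last (by simp only [DEdgeV.height]; rw [Nat.mul_assoc] at hlen; omega)

variable (G) [DecidableRel G.Adj] {χ : Fin k → Fin N → Bool} {ℓ : Fin N}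

theorem isChain_eTriple (i : Fin k) (q : Fin N) (b : Bool) :
    (eTriple G i j q ℓ b).IsChain (TightEdge (DEdgeE k N G) DEdgeV.height) := by
  unfold eTriple
  split_ifs with hs <;>
    refine List.isChain_cons_cons.2 ⟨⟨?_, rfl⟩, List.isChain_pair.2 ⟨?_, rfl⟩⟩
  exacts [.hor1 _ _ _ _ hs, .hor2 _ _ _ _ hs, .ver1 _ _ _ _ hs, .ver2 _ _ _ _ hs,
    .mid1 _ _ _ _ hs, .mid2 _ _ _ _ hs]

theorem isChain_flatMap_eTriple (i : Fin k) :
    ((List.finRange N).flatMap fun q => eTriple G i j q ℓ (χ i q)).IsChain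
      (TightEdge (DEdgeE k N G) DEdgeV.height) := by
  refine List.IsChain.flatMap ((List.isChain_finRange N).imp ?_) (fun _ => List.cons_ne_nil _ _)
    (fun q _ => isChain_eTriple G i q _)
  intro q q' h x hx y hy
  simp only [eTriple, List.getLast?_cons_cons, List.getLast?_singleton, List.head?_cons,
    Option.mem_def, Option.some.injEq] at hx hy
  subst hx hy
  refine ⟨.right _ _ _ _ _ h, ?_⟩
  simp only [DEdgeV.height, ETag.height, h]
  omega

theorem isChain_imageH (hN : 1 ≤ N) (hk : 1 ≤ k) :
    (imageH G χ j ℓ).IsChain (TightEdge (DEdgeE k N G) DEdgeV.height) := by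
  obtain ⟨n, rfl⟩ := Nat.exists_eq_add_of_le' hN
  obtain ⟨m, rfl⟩ := Nat.exists_eq_add_of_le' hk
  have hhead (i : Fin (m + 1)) :
      ((List.finRange (n + 1)).flatMap fun q => eTriple G i j q ℓ (χ i q)).head? =
        some (.grid i j 0 ℓ .LB) :=
    List.head?_flatMap_finRange _ (List.cons_ne_nil _ _)
  have hlast (i : Fin (m + 1)) :
      ((List.finRange (n + 1)).flatMap fun q => eTriple G i j q ℓ (χ i q)).getLast? =
        some (.grid i j (Fin.last n) ℓ .TR) :=
    List.getLast?_flatMap_finRange _ (List.cons_ne_nil _ _)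
  have hrow_ne (i : Fin (m + 1)) :
      ((List.finRange (n + 1)).flatMap fun q => eTriple G i j q ℓ (χ i q)) ≠ [] :=
    List.ne_nil_of_mem (List.mem_of_mem_head? (hhead i))
  have hcells := List.IsChain.flatMap
    ((List.isChain_finRange (m + 1)).imp fun i i' h x hx y hy => by
      rw [hlast, Option.mem_some_iff] at hx
      rw [hhead, Option.mem_some_iff] at hy
      subst hx hy
      refine ⟨.hmatch _ _ _ _ _ _ h (by simp) rfl, ?_⟩
      simp only [DEdgeV.height, ETag.height, h, Fin.val_last, Fin.val_zero, Nat.succ_mul]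
      omega)
    hrow_ne (fun i _ => isChain_flatMap_eTriple G i)
  rw [imageH, List.isChain_cons, List.isChain_append]
  refine ⟨?_, hcells, List.IsChain.singleton _, ?_⟩
  · rw [List.head?_append, List.head?_flatMap_finRange _ (hrow_ne 0), hhead, Option.some_or]
    rintro y ⟨⟩
    exact ⟨.srcC _ _ _ _ rfl rfl, by simp [DEdgeV.height, ETag.height]⟩
  · rw [List.getLast?_flatMap_finRange _ (hrow_ne _), hlast]
    rintro x ⟨⟩ y ⟨⟩
    refine ⟨.snkD _ _ _ _ (by simp) (by simp), ?_⟩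
    simp only [DEdgeV.height, ETag.height, Fin.val_last, Nat.succ_mul]
    omega

theorem mem_imageH {x : DEdgeV k N} :
    x ∈ imageH G χ j ℓ ↔
      x = .c j ∨ (∃ i q, x ∈ eTriple G i j q ℓ (χ i q)) ∨ x = .d j := by
  simp [imageH, List.mem_flatMap, or_comm]

theorem grid_mem_imageH {i : Fin k} {q : Fin N} {t : ETag}
    (ht : t = .LB ∨ t = .TR ∨
      t = if Split G i j q ℓ then (if χ i q then .Hor else .Ver) else .Mid) :
    DEdgeV.grid i j q ℓ t ∈ imageH G χ j ℓ :=
  (mem_imageH G).2 <| .inr <| .inl ⟨i, q, by rcases ht with rfl | rfl | rfl <;> simp [eTriple]⟩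

theorem mem_imageH_of_tightEdge {x y : DEdgeV k N} (hx : x ∈ imageH G χ j ℓ) (hxc : x ≠ .c j)
    (hxy : TightEdge (DEdgeE k N G) DEdgeV.height x y)
    (hHor : ∀ i q, y = .grid i j q ℓ .Hor → χ i q = true)
    (hVer : ∀ i q, y = .grid i j q ℓ .Ver → χ i q = false) :
    y ∈ imageH G χ j ℓ ∧ y ≠ .c j := by
  obtain ⟨hE, hh⟩ := hxy
  rcases (mem_imageH G).1 hx with rfl | ⟨i, q, hx⟩ | rfl
  · exact absurd rfl hxc
  · simp only [eTriple, List.mem_cons, List.not_mem_nil, or_false] at hx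
    rcases hx with rfl | rfl | rfl
    · cases hE with
      | mid1 _ _ _ _ hs => exact ⟨grid_mem_imageH G (by simp [hs]), by simp⟩
      | hor1 _ _ _ _ hs => exact ⟨grid_mem_imageH G (by simp [hs, hHor i q rfl]), by simp⟩
      | ver1 _ _ _ _ hs => exact ⟨grid_mem_imageH G (by simp [hs, hVer i q rfl]), by simp⟩
    · split_ifs at hE <;> cases hE <;> exact ⟨grid_mem_imageH G (by simp), by simp⟩
    · cases hE with
      | right | hmatch => exact ⟨grid_mem_imageH G (by simp), by simp⟩
      | snkD => exact ⟨(mem_imageH G).2 (by simp), by simp⟩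
      | _ => simp only [DEdgeV.height, ETag.height] at hh; omega
  · cases hE

theorem exists_subset_imageH_of_tightEdge {p : List (DEdgeV k N)}
    (hp : p.IsChain (TightEdge (DEdgeE k N G) DEdgeV.height))
    (hhead : p.head? = some (.c j)) (hlast : p.getLast? = some (.d j)) :
    ∃ (ℓ : Fin N) (χ : Fin k → Fin N → Bool), p ⊆ imageH G χ j ℓ := by
  obtain ⟨_ | ⟨y, t⟩, rfl⟩ : ∃ t, p = .c j :: t := ⟨p.tail, by
    rcases p with _ | ⟨x, t⟩ <;> simp_all⟩
  · simp at hlast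
  have hinj := List.inj_on_of_nodup_map hp.pairwise_map_of_tightEdge.nodup
  obtain ⟨hcy, hyt⟩ := List.isChain_cons_cons.1 hp
  obtain ⟨hE, -⟩ := hcy
  cases hE with
  | srcC i₀ _ q₀ ℓ =>
    set p := DEdgeV.c j :: DEdgeV.grid i₀ j q₀ ℓ .LB :: t
    -- `χ` records which copy `p` uses; it cannot use both, as they have the same height.
    let χ (i : Fin k) (q : Fin N) : Bool := decide (.grid i j q ℓ .Hor ∈ p)
    refine ⟨ℓ, χ, ?_⟩
    have htail :
        ∀ z ∈ DEdgeV.grid i₀ j q₀ ℓ .LB :: t, z ∈ imageH G χ j ℓ ∧ z ≠ .c j := by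
      refine (List.IsChain.iff_mem.1 hyt).induction _ _ ?_
        (fun _ => ⟨grid_mem_imageH G (by simp), by simp⟩)
      rintro x z ⟨-, hz, hxz⟩ ⟨hx, hxc⟩
      have hzp : z ∈ p := List.mem_cons_of_mem _ hz
      refine mem_imageH_of_tightEdge G hx hxc hxz (fun i q h => decide_eq_true (h ▸ hzp))
        (fun i q h => decide_eq_false fun hHor => ?_)
      subst h
      exact absurd (hinj hHor hzp rfl) (by simp)
    intro z hz
    rcases List.mem_cons.1 hz with rfl | hz
    · exact (mem_imageH G).2 (.inl rfl)
    · exact (htail z hz).1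

theorem getLast?_imageH : (imageH G χ j ℓ).getLast? = some (.d j) := by
  simp [imageH, List.getLast?_cons]

theorem length_imageH (hN : 1 ≤ N) (hk : 1 ≤ k) :
    (imageH G χ j ℓ).length = 3 * k * N + 2 := by
  have := (isChain_imageH G (χ := χ) (j := j) (ℓ := ℓ) hN hk).potential_eq_of_tightEdge rfl
    (getLast?_imageH G)
  simp only [DEdgeV.height] at this
  rw [Nat.mul_assoc]
  omega

theorem isPathList_imageH (hN : 1 ≤ N) (hk : 1 ≤ k) :
    IsPathList (DEdgeE k N G) (.c j) (.d j) (imageH G χ j ℓ) where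
  chain := (isChain_imageH G hN hk).imp fun _ _ h => h.1
  nodup := (isChain_imageH G hN hk).pairwise_map_of_tightEdge.nodup.of_map _
  head := rfl
  last := getLast?_imageH G

end DEdge

/-- for every `j ∈ [k]`: (i) for each `r ∈ [N]` the path
`Canonical_edge(r; c_j⇝d_j)` is a shortest `c_j⇝d_j` path in `D_edge`, with exactly
`3kN + 2` vertices; and (ii) every shortest directed `c_j⇝d_j` path in `D_edge` is an
image in `D_edge` of the horizontal canonical path `Canonical(ℓ; c_j⇝d_j)` of `D_int`
for some `ℓ ∈ [N]`. -/
theorem DEdge_canonH_shortest (N k : ℕ) (hN : 1 ≤ N) (hk : 1 ≤ k)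
    (G : SimpleGraph (Fin N)) [DecidableRel G.Adj] (j : Fin k) :
    (∀ r : Fin N,
      IsShortestDirPath (DEdgeE k N G) (DEdgeV.c j) (DEdgeV.d j) (canonEdgeH G j r) ∧
      (canonEdgeH G j r).length = 3 * k * N + 2) ∧
    (∀ p : List (DEdgeV k N),
      IsShortestDirPath (DEdgeE k N G) (DEdgeV.c j) (DEdgeV.d j) p →
      ∃ (ℓ : Fin N) (χ : Fin k → Fin N → Bool), p = imageH G χ j ℓ) := by
  refine ⟨fun r => ⟨⟨isPathList_imageH G hN hk, fun p hp => ?_⟩, length_imageH G hN hk⟩,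
    fun p ⟨hp, hmin⟩ => ?_⟩
  · exact (length_imageH G hN hk).trans_le hp.length_ge
  have hlen : p.length ≤ 3 * k * N + 2 :=
    (hmin (canonEdgeH G j ⟨0, hN⟩) (isPathList_imageH G hN hk)).trans_eq (length_imageH G hN hk)
  have htight := hp.isChain_tightEdge hlen
  obtain ⟨ℓ, χ, hsub⟩ := exists_subset_imageH_of_tightEdge G htight hp.head hp.last
  refine ⟨ℓ, χ, List.eq_of_subset_of_pairwise_map_lt htight.pairwise_map_of_tightEdge
    (isChain_imageH G hN hk).pairwise_map_of_tightEdge hsub ?_⟩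
  rw [length_imageH G hN hk]
  exact hp.length_ge
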